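/- Every invertible skew-symmetric real 2L×2L matrix A can be brought into canonical block form by an orthogonal matrix: there exist an orthogonal matrix V ∈ O(2L) and a diagonal matrix E with strictly positive diagonal entries such that V A Vᵀ equals the block matrix [[0, E], [-E, 0]]. -/

import Mathlib

/-!
`S = -A² = AᵀA` is symmetric and positive definite. If `v` is a unit eigenvector of `S`, then
`S v = ‖A v‖² v`, so with `e = ‖A v‖` and `w = -A v / e` we get `A v = -e w`, `A w = e v` and
`v ⊥ w`. The plane `span {v, w}` is `A`-invariant, hence so is its orthogonal complement
(`A` is skew), and induction on the dimension gives an orthonormal basis `v₁, …, v_L, w₁, …, w_L`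
in which `A` has the block form `[[0, E], [-E, 0]]`; these vectors are the rows of `V`.
-/

open Matrix Module Submodule
open scoped RealInnerProductSpace

variable {E : Type*} [NormedAddCommGroup E] [InnerProductSpace ℝ E] {T : E →ₗ[ℝ] E}
  {m : ℕ} {e : Fin m → ℝ} {v w : Fin m → E}

theorem orthogonal_invariant_of_skew (hT : ∀ x y, ⟪T x, y⟫ = -⟪x, T y⟫) {K : Submodule ℝ E}
    (hK : ∀ x ∈ K, T x ∈ K) : ∀ x ∈ Kᗮ, T x ∈ Kᗮ := fun x hx y hy => by
  rw [real_inner_comm, hT, inner_left_of_mem_orthogonal (hK y hy) hx, neg_zero]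

theorem inner_map_self_eq_zero_of_skew (hT : ∀ x y, ⟪T x, y⟫ = -⟪x, T y⟫) (x : E) :
    ⟪x, T x⟫ = 0 := by
  have := hT x x
  rw [real_inner_comm] at this
  linarith

theorem isSymmetric_neg_comp_self_of_skew (hT : ∀ x y, ⟪T x, y⟫ = -⟪x, T y⟫) :
    (-(T ∘ₗ T)).IsSymmetric := fun x y => by
  simp only [LinearMap.neg_apply, LinearMap.comp_apply, inner_neg_left, inner_neg_right, hT,
    neg_neg]

theorem exists_orthonormal_pair_of_skew [FiniteDimensional ℝ E] [Nontrivial E]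
    (hT : ∀ x y, ⟪T x, y⟫ = -⟪x, T y⟫) (hinj : Function.Injective T) :
    ∃ e : ℝ, 0 < e ∧ ∃ v w : E, Orthonormal ℝ ![v, w] ∧ T v = -e • w ∧ T w = e • v := by
  have hS := isSymmetric_neg_comp_self_of_skew hT
  set i : Fin (finrank ℝ E) := ⟨0, finrank_pos⟩
  set v := hS.eigenvectorBasis rfl i
  set μ := hS.eigenvalues rfl i
  have hv : ‖v‖ = 1 := (hS.eigenvectorBasis rfl).orthonormal.1 i
  have hTTv : T (T v) = -(μ • v) := by
    have := hS.apply_eigenvectorBasis rfl i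
    simp only [LinearMap.neg_apply, LinearMap.comp_apply, RCLike.ofReal_real_eq_id, id] at this
    rw [← this, neg_neg]
  set e := ‖T v‖
  have he : 0 < e := norm_pos_iff.mpr <|
    (map_ne_zero_iff T hinj).mpr ((hS.eigenvectorBasis rfl).orthonormal.ne_zero i)
  have hμ : μ = e ^ 2 := by
    have := hT (T v) v
    rw [hTTv, inner_neg_left, real_inner_smul_left, real_inner_self_eq_norm_sq, hv,
      real_inner_self_eq_norm_sq] at this
    linarith
  refine ⟨e, he, v, -e⁻¹ • T v, ?_, ?_, ?_⟩
  · simp [hv, norm_smul, he.ne', inner_smul_right, inner_map_self_eq_zero_of_skew hT, e]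
  · rw [smul_smul, neg_mul_neg, mul_inv_cancel₀ he.ne', one_smul]
  · rw [map_smul, hTTv, hμ, smul_neg, smul_smul, ← neg_smul]
    congr 1
    field_simp

theorem exists_orthonormal_pair_mem_of_skew [FiniteDimensional ℝ E]
    (hT : ∀ x y, ⟪T x, y⟫ = -⟪x, T y⟫) (hinj : Function.Injective T) {W : Submodule ℝ E}
    (hW : ∀ x ∈ W, T x ∈ W) (hW₀ : W ≠ ⊥) :
    ∃ e : ℝ, 0 < e ∧ ∃ v ∈ W, ∃ w ∈ W,
      Orthonormal ℝ ![v, w] ∧ T v = -e • w ∧ T w = e • v := by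
  have := nontrivial_iff_ne_bot.mpr hW₀
  obtain ⟨e, he, v, w, hvw, hv, hw⟩ := exists_orthonormal_pair_of_skew (T := T.restrict hW)
    (fun x y => hT x y) (fun x y hxy => Subtype.ext (hinj (congrArg Subtype.val hxy)))
  refine ⟨e, he, v, v.2, w, w.2, ?_, congrArg Subtype.val hv, congrArg Subtype.val hw⟩
  simpa using hvw

structure IsSkewNormalForm (T : E →ₗ[ℝ] E) (e : Fin m → ℝ) (v w : Fin m → E) : Prop where
  pos : ∀ i, 0 < e i
  orthonormal : Orthonormal ℝ (Sum.elim v w)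
  apply_left : ∀ i, T (v i) = -e i • w i
  apply_right : ∀ i, T (w i) = e i • v i

theorem IsSkewNormalForm.cons {e₀ : ℝ} {v₀ w₀ : E}
    (h : IsSkewNormalForm T e v w) (he₀ : 0 < e₀) (h₀ : Orthonormal ℝ ![v₀, w₀])
    (hv₀ : T v₀ = -e₀ • w₀) (hw₀ : T w₀ = e₀ • v₀)
    (hperp : ∀ j, Sum.elim v w j ∈ (span ℝ (Set.range ![v₀, w₀]))ᗮ) :
    IsSkewNormalForm T (Fin.cons e₀ e) (Fin.cons v₀ v) (Fin.cons w₀ w) := by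
  refine ⟨Fin.cases he₀ h.pos, ?_, Fin.cases hv₀ h.apply_left, Fin.cases hw₀ h.apply_right⟩
  have hK : ∀ k j, ⟪![v₀, w₀] k, Sum.elim v w j⟫ = 0 ∧ ⟪Sum.elim v w j, ![v₀, w₀] k⟫ = 0 :=
    fun k j => ⟨inner_right_of_mem_orthogonal (subset_span (Set.mem_range_self k)) (hperp j),
      inner_left_of_mem_orthogonal (subset_span (Set.mem_range_self k)) (hperp j)⟩
  have hu := orthonormal_iff_ite.mp h.orthonormal
  simp only [Fin.forall_fin_two, Sum.forall, Sum.elim_inl, Sum.elim_inr, Sum.inl.injEq,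
    Sum.inr.injEq, reduceCtorEq, if_false, cons_val_zero, cons_val_one, forall_and] at hK hu
  have hnv₀ : ‖v₀‖ = 1 := h₀.norm_eq_one 0
  have hnw₀ : ‖w₀‖ = 1 := h₀.norm_eq_one 1
  have hv₀w₀ : ⟪v₀, w₀⟫ = 0 := h₀.inner_eq_zero zero_ne_one
  have hw₀v₀ : ⟪w₀, v₀⟫ = 0 := h₀.inner_eq_zero one_ne_zero
  rw [orthonormal_iff_ite]
  rintro (i | i) (j | j) <;> cases i using Fin.cases <;> cases j using Fin.cases <;>
    simp [hK, hu, hnv₀, hnw₀, hv₀w₀, hw₀v₀, Fin.succ_ne_zero, (Fin.succ_ne_zero _).symm]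

theorem IsSkewNormalForm.inner_apply_eq_fromBlocks (h : IsSkewNormalForm T e v w)
    (s t : Fin m ⊕ Fin m) :
    ⟪Sum.elim v w s, T (Sum.elim v w t)⟫ =
      fromBlocks 0 (diagonal e) (-diagonal e) 0 s t := by
  have hu := orthonormal_iff_ite.mp h.orthonormal
  simp only [Sum.forall, Sum.elim_inl, Sum.elim_inr, Sum.inl.injEq, Sum.inr.injEq, reduceCtorEq,
    if_false, forall_and] at hu
  rcases s with k | k <;> rcases t with i | i <;>
    simp [h.apply_left, h.apply_right, inner_smul_right, hu, diagonal_apply] <;>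
    split_ifs with hki <;> simp [hki]

theorem exists_isSkewNormalForm_of_invariant [FiniteDimensional ℝ E]
    (hT : ∀ x y, ⟪T x, y⟫ = -⟪x, T y⟫) (hinj : Function.Injective T) (W : Submodule ℝ E)
    (hW : ∀ x ∈ W, T x ∈ W) :
    ∃ (m : ℕ) (e : Fin m → ℝ) (v w : Fin m → E), IsSkewNormalForm T e v w ∧
      (∀ j, Sum.elim v w j ∈ W) ∧ m + m = finrank ℝ W := by
  induction hn : finrank ℝ W using Nat.strong_induction_on generalizing W with
  | _ n ih =>
  rcases eq_or_ne W ⊥ with rfl | hW₀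
  · refine ⟨0, finZeroElim, finZeroElim, finZeroElim, ⟨finZeroElim, .of_isEmpty _, finZeroElim,
      finZeroElim⟩, fun j => by rcases j with j | j <;> exact j.elim0, by simp [← hn]⟩
  obtain ⟨e₀, he₀, v₀, hv₀W, w₀, hw₀W, h₀, hv₀, hw₀⟩ :=
    exists_orthonormal_pair_mem_of_skew hT hinj hW hW₀
  set K := span ℝ (Set.range ![v₀, w₀])
  have hKW : K ≤ W :=
    span_le.mpr <| Set.range_subset_iff.mpr <| Fin.forall_fin_two.mpr ⟨hv₀W, hw₀W⟩
  have hK : K ≤ K.comap T := span_le.mpr <| Set.range_subset_iff.mpr <| Fin.forall_fin_two.mpr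
    ⟨by simpa [hv₀] using smul_mem K (-e₀) (subset_span (Set.mem_range_self 1)),
      by simpa [hw₀] using smul_mem K e₀ (subset_span (Set.mem_range_self 0))⟩
  have hrank : 2 + finrank ℝ ↥(Kᗮ ⊓ W) = n := by
    rw [← hn, ← finrank_add_inf_finrank_orthogonal hKW, finrank_span_eq_card h₀.linearIndependent]
    simp
  obtain ⟨m, e, v, w, h, hmem, hm⟩ := ih _ (by omega) (Kᗮ ⊓ W)
    (fun x hx => ⟨orthogonal_invariant_of_skew hT hK x hx.1, hW x hx.2⟩) rfl
  refine ⟨m + 1, _, _, _, h.cons he₀ h₀ hv₀ hw₀ fun j => (hmem j).1, ?_, by omega⟩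
  rintro (i | i) <;> cases i using Fin.cases
  exacts [hv₀W, (hmem (.inl _)).2, hw₀W, (hmem (.inr _)).2]

theorem exists_isSkewNormalForm [FiniteDimensional ℝ E]
    (hT : ∀ x y, ⟪T x, y⟫ = -⟪x, T y⟫) (hinj : Function.Injective T) :
    ∃ (m : ℕ) (e : Fin m → ℝ) (v w : Fin m → E), IsSkewNormalForm T e v w ∧
      m + m = finrank ℝ E := by
  obtain ⟨m, e, v, w, h, -, hm⟩ :=
    exists_isSkewNormalForm_of_invariant hT hinj ⊤ fun _ _ => trivial
  exact ⟨m, e, v, w, h, hm.trans (finrank_top ℝ E)⟩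

theorem of_mul_mul_transpose_apply {ι n : Type*} [Fintype n] [DecidableEq n]
    (u : ι → EuclideanSpace ℝ n) (A : Matrix n n ℝ) (i j : ι) :
    (of (fun i k => u i k) * A * (of fun i k => u i k)ᵀ) i j =
      ⟪u i, toEuclideanLin A (u j)⟫ := by
  simp only [mul_apply, of_apply, transpose_apply, EuclideanSpace.inner_eq_star_dotProduct,
    ofLp_toLpLin, toLin'_apply, dotProduct, mulVec, star_trivial, Finset.sum_mul]
  rw [Finset.sum_comm]
  exact Finset.sum_congr rfl fun k _ => Finset.sum_congr rfl fun l _ => by ring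

theorem of_mul_transpose_apply {ι n : Type*} [Fintype n] (u : ι → EuclideanSpace ℝ n)
    (i j : ι) : (of (fun i k => u i k) * (of fun i k => u i k)ᵀ) i j = ⟪u i, u j⟫ := by
  simp only [mul_apply, of_apply, transpose_apply, EuclideanSpace.inner_eq_star_dotProduct,
    dotProduct, star_trivial, mul_comm]

theorem inner_toEuclideanLin_of_transpose_eq_neg {n : Type*} [Fintype n] [DecidableEq n]
    {A : Matrix n n ℝ} (hA : Aᵀ = -A) (x y : EuclideanSpace ℝ n) :
    ⟪toEuclideanLin A x, y⟫ = -⟪x, toEuclideanLin A y⟫ := by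
  rw [← LinearMap.adjoint_inner_right, ← toEuclideanLin_conjTranspose_eq_adjoint,
    conjTranspose_eq_transpose_of_trivial, hA, map_neg, LinearMap.neg_apply, inner_neg_right]

theorem injective_toEuclideanLin_of_isUnit_det {n : Type*} [Fintype n] [DecidableEq n]
    {A : Matrix n n ℝ} (hA : IsUnit A.det) : Function.Injective (toEuclideanLin A) := by
  intro x y hxy
  have := congrArg WithLp.ofLp hxy
  simp only [ofLp_toLpLin, toLin'_apply] at this
  exact WithLp.ofLp_injective 2
    (mulVec_injective_iff_isUnit.mpr ((isUnit_iff_isUnit_det A).mpr hA) this)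

/-- Every invertible skew-symmetric real `2L × 2L` matrix `A` can be brought into
canonical block form by an orthogonal matrix: there exist an orthogonal matrix
`V ∈ O(2L)` and a diagonal matrix `E` with strictly positive diagonal entries
such that `V * A * Vᵀ` equals the block matrix `[[0, E], [-E, 0]]`. -/
theorem skew_symmetric_canonical_form {L : ℕ} (A : Matrix (Fin (2 * L)) (Fin (2 * L)) ℝ)
    (hA : Aᵀ = -A) (hAinv : IsUnit A.det) :
    ∃ (V : Matrix (Fin (2 * L)) (Fin (2 * L)) ℝ) (e : Fin L → ℝ),
      V * Vᵀ = 1 ∧ (∀ i, 0 < e i) ∧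
      V * A * Vᵀ =
        Matrix.reindex (finSumFinEquiv.trans (finCongr (by omega)))
          (finSumFinEquiv.trans (finCongr (by omega)))
          (Matrix.fromBlocks 0 (Matrix.diagonal e) (-(Matrix.diagonal e)) 0) := by
  obtain ⟨m, e, v, w, h, hm⟩ := exists_isSkewNormalForm
    (inner_toEuclideanLin_of_transpose_eq_neg hA) (injective_toEuclideanLin_of_isUnit_det hAinv)
  obtain rfl : m = L := by rw [finrank_euclideanSpace_fin] at hm; omega
  let σ : Fin m ⊕ Fin m ≃ Fin (2 * m) := finSumFinEquiv.trans (finCongr (by omega))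
  let u := Sum.elim v w ∘ σ.symm
  refine ⟨of fun p k => u p k, e, ?_, h.pos, ?_⟩
  · ext p q
    rw [of_mul_transpose_apply, one_apply]
    exact orthonormal_iff_ite.mp (h.orthonormal.comp _ σ.symm.injective) p q
  · ext p q
    rw [of_mul_mul_transpose_apply, reindex_apply, submatrix_apply]
    exact h.inner_apply_eq_fromBlocks _ _
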